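/- Let m = 2^l and n = 4m+1, and let T_l be the oriented graph with vertices x_i for i ∈ Z/nZ and arcs x_i x_{i+m} and x_i x_{i+m+1}. Assigning to x_i the m-element set {i, i+1, ..., i+m−1} (mod n) is a valid m-fold oriented n-coloring of T_l; consequently χ_o^*(T_l) ≤ 4 + 1/2^l. -/

import Mathlib

/-- An oriented graph: a directed graph with no loops and no directed 2-cycles. -/
structure OGraph (V : Type*) where
  adj : V → V → Prop
  irrefl : ∀ v, ¬ adj v v
  asymm : ∀ u v, adj u v → ¬ adj v u

/-- A homomorphism of oriented graphs. -/
def OGraph.Hom {V W : Type*} (G : OGraph V) (H : OGraph W) (f : V → W) : Prop :=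
  ∀ u v, G.adj u v → H.adj (f u) (f v)

/-- `f` is a `b`-fold oriented `k`-coloring of `G`. -/
def IsFoldColoring {V : Type*} (G : OGraph V) (b k : ℕ) (f : V → Finset (Fin k)) : Prop :=
  (∀ v, (f v).card = b) ∧
  (∀ u v, G.adj u v → Disjoint (f u) (f v)) ∧
  (∀ x y z w, G.adj x y → G.adj z w → ¬ Disjoint (f x) (f w) → Disjoint (f y) (f z))

/-- The `b`-fold oriented chromatic number. -/
noncomputable def foldChrom {V : Type*} (G : OGraph V) (b : ℕ) : ℕ :=
  sInf {k | ∃ f : V → Finset (Fin k), IsFoldColoring G b k f}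

/-- The fractional oriented chromatic number: the infimum of `k/b` over all
`b`-fold oriented `k`-colorings. -/
noncomputable def fracChrom {V : Type*} (G : OGraph V) : ℝ :=
  sInf {x : ℝ | ∃ (b k : ℕ) (f : V → Finset (Fin k)),
    0 < b ∧ IsFoldColoring G b k f ∧ x = (k : ℝ) / b}

/-- The oriented graph `T_l` on `ℤ/(4·2^l+1)ℤ` with arcs `x → x + 2^l` and `x → x + 2^l + 1`. -/
def Tgraph (l : ℕ) : OGraph (ZMod (4 * 2 ^ l + 1)) where
  adj u v := v = u + (2 ^ l : ℕ) ∨ v = u + (2 ^ l : ℕ) + 1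
  irrefl := by
    intro v hv
    have hm : 0 < 2 ^ l := Nat.pow_pos (by norm_num)
    rcases hv with h | h
    · have h1 : ((2 ^ l : ℕ) : ZMod (4 * 2 ^ l + 1)) = 0 := left_eq_add.mp h
      rw [ZMod.natCast_eq_zero_iff] at h1
      have := Nat.le_of_dvd hm h1
      omega
    · have h1 : ((2 ^ l + 1 : ℕ) : ZMod (4 * 2 ^ l + 1)) = 0 := by
        have := left_eq_add.mp (by rwa [add_assoc] at h)
        push_cast
        push_cast at this
        linear_combination this
      rw [ZMod.natCast_eq_zero_iff] at h1
      have := Nat.le_of_dvd (by omega) h1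
      omega
  asymm := by
    intro u v h1 h2
    have key : ∀ a : ℕ, 0 < a → a < 4 * 2 ^ l + 1 →
        ((a : ℕ) : ZMod (4 * 2 ^ l + 1)) ≠ 0 := by
      intro a ha hlt h0
      rw [ZMod.natCast_eq_zero_iff] at h0
      have := Nat.le_of_dvd ha h0
      omega
    have hm : 0 < 2 ^ l := Nat.pow_pos (by norm_num)
    rcases h1 with h1 | h1 <;> rcases h2 with h2 | h2
    · have : ((2 ^ l + 2 ^ l : ℕ) : ZMod (4 * 2 ^ l + 1)) = 0 := by
        have : u = u + ((2 ^ l : ℕ) + (2 ^ l : ℕ)) := by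
          conv_lhs => rw [h2, h1]
          ring
        have := left_eq_add.mp this
        push_cast
        push_cast at this
        linear_combination this
      exact key _ (by omega) (by omega) this
    · have : ((2 ^ l + 2 ^ l + 1 : ℕ) : ZMod (4 * 2 ^ l + 1)) = 0 := by
        have : u = u + ((2 ^ l : ℕ) + (2 ^ l : ℕ) + 1) := by
          conv_lhs => rw [h2, h1]
          ring
        have := left_eq_add.mp this
        push_cast
        push_cast at this
        linear_combination this
      exact key _ (by omega) (by omega) this
    · have : ((2 ^ l + 2 ^ l + 1 : ℕ) : ZMod (4 * 2 ^ l + 1)) = 0 := by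
        have : u = u + ((2 ^ l : ℕ) + (2 ^ l : ℕ) + 1) := by
          conv_lhs => rw [h2, h1]
          ring
        have := left_eq_add.mp this
        push_cast
        push_cast at this
        linear_combination this
      exact key _ (by omega) (by omega) this
    · have : ((2 ^ l + 2 ^ l + 2 : ℕ) : ZMod (4 * 2 ^ l + 1)) = 0 := by
        have : u = u + ((2 ^ l : ℕ) + (2 ^ l : ℕ) + 2) := by
          conv_lhs => rw [h2, h1]
          ring
        have := left_eq_add.mp this
        push_cast
        push_cast at this
        linear_combination this
      exact key _ (by omega) (by omega) this

/-!
Colour `x_i` by the cyclic interval `[i, i + m)`, `m = 2^l`. Two such intervals in `ℤ/nℤ` are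
disjoint as soon as their starting points differ by some `d` with `m ≤ d ≤ n - m`, and they meet
only if the starting points differ by an integer `e` with `|e| < m`. Arcs shift by `a ∈ {m, m+1}`,
so for arcs `xy`, `zw` with the intervals of `x` and `w` meeting, `y - z = a + c - e` lies in
`[m + 1, 3m + 1] = [m + 1, n - m]`, which separates the intervals of `y` and `z`.
-/

open Finset

lemma eq_zero_of_intCast_eq_zero_of_abs_lt {n : ℕ} {a : ℤ} (h : (a : ZMod n) = 0) (ha : |a| < n) :
    a = 0 :=
  Int.eq_zero_of_abs_lt_dvd ((ZMod.intCast_zmod_eq_zero_iff_dvd a n).mp h) ha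

section CyclicInterval

variable {n : ℕ} [NeZero n] {m : ℕ}

def cyclicInterval (m : ℕ) (i : ZMod n) : Finset (Fin n) :=
  (range m).image fun j => ⟨(i + (j : ℕ)).val, ZMod.val_lt _⟩

lemma card_cyclicInterval (i : ZMod n) (h : m ≤ n) : #(cyclicInterval m i) = m := by
  rw [cyclicInterval, card_image_of_injOn, card_range]
  intro j₁ hj₁ j₂ hj₂ he
  simp only [coe_range, Set.mem_Iio] at hj₁ hj₂
  have hcast : ((j₁ - j₂ : ℤ) : ZMod n) = 0 := by
    have : i + (j₁ : ZMod n) = i + j₂ := ZMod.val_injective _ (congrArg Fin.val he)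
    push_cast
    linear_combination this
  have := eq_zero_of_intCast_eq_zero_of_abs_lt hcast (by rw [abs_lt]; omega)
  omega

lemma exists_eq_add_of_not_disjoint_cyclicInterval {x w : ZMod n}
    (h : ¬ Disjoint (cyclicInterval m x) (cyclicInterval m w)) :
    ∃ e : ℤ, |e| < m ∧ w = x + e := by
  obtain ⟨c, hcx, hcw⟩ := not_disjoint_iff.mp h
  simp only [cyclicInterval, mem_image, mem_range] at hcx hcw
  obtain ⟨j₁, hj₁, rfl⟩ := hcx
  obtain ⟨j₂, hj₂, he⟩ := hcw
  have : w + (j₂ : ZMod n) = x + j₁ := ZMod.val_injective _ (congrArg Fin.val he)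
  refine ⟨j₁ - j₂, by rw [abs_lt]; omega, ?_⟩
  push_cast
  linear_combination this

lemma disjoint_cyclicInterval_add (x : ZMod n) {d : ℤ} (h₁ : m ≤ d) (h₂ : d + m ≤ n) :
    Disjoint (cyclicInterval m x) (cyclicInterval m (x + d)) := by
  by_contra h
  obtain ⟨e, he, hxe⟩ := exists_eq_add_of_not_disjoint_cyclicInterval h
  rw [abs_lt] at he
  have hcast : ((d - e : ℤ) : ZMod n) = 0 := by
    push_cast
    linear_combination hxe
  have := eq_zero_of_intCast_eq_zero_of_abs_lt hcast (by rw [abs_lt]; omega)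
  omega

end CyclicInterval

lemma fracChrom_le_of_isFoldColoring {V : Type*} {G : OGraph V} {b k : ℕ}
    {f : V → Finset (Fin k)} (hb : 0 < b) (hf : IsFoldColoring G b k f) :
    fracChrom G ≤ k / b := by
  refine csInf_le ⟨0, ?_⟩ ⟨b, k, f, hb, hf, rfl⟩
  rintro x ⟨b, k, f, -, -, rfl⟩
  positivity

lemma exists_eq_add_of_Tgraph_adj {l : ℕ} {u v : ZMod (4 * 2 ^ l + 1)} (h : (Tgraph l).adj u v) :
    ∃ a : ℤ, 2 ^ l ≤ a ∧ a ≤ 2 ^ l + 1 ∧ v = u + a := by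
  rcases h with rfl | rfl
  · exact ⟨2 ^ l, le_rfl, by omega, by push_cast; ring⟩
  · exact ⟨2 ^ l + 1, by omega, le_rfl, by push_cast; ring⟩

theorem isFoldColoring_Tgraph (l : ℕ) :
    IsFoldColoring (Tgraph l) (2 ^ l) (4 * 2 ^ l + 1) (cyclicInterval (2 ^ l)) := by
  refine ⟨fun v => card_cyclicInterval v (by omega), ?_, ?_⟩
  · intro u v huv
    obtain ⟨a, ha₁, ha₂, rfl⟩ := exists_eq_add_of_Tgraph_adj huv
    have : (0 : ℤ) < 2 ^ l := by positivity
    exact disjoint_cyclicInterval_add u (by push_cast; omega) (by push_cast; omega)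
  · intro x y z w hxy hzw hxw
    obtain ⟨a, ha₁, ha₂, rfl⟩ := exists_eq_add_of_Tgraph_adj hxy
    obtain ⟨c, hc₁, hc₂, rfl⟩ := exists_eq_add_of_Tgraph_adj hzw
    obtain ⟨e, he, hze⟩ := exists_eq_add_of_not_disjoint_cyclicInterval hxw
    rw [abs_lt] at he
    push_cast at he
    have hy : x + a = z + (a + c - e : ℤ) := by
      push_cast
      linear_combination -hze
    rw [hy]
    exact (disjoint_cyclicInterval_add z (by push_cast; omega) (by push_cast; omega)).symm

theorem stmt18 (l : ℕ) :
    IsFoldColoring (Tgraph l) (2 ^ l) (4 * 2 ^ l + 1)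
      (fun i : ZMod (4 * 2 ^ l + 1) =>
        (Finset.range (2 ^ l)).image
          (fun j => (⟨(i + (j : ℕ)).val, ZMod.val_lt _⟩ : Fin (4 * 2 ^ l + 1)))) ∧
    fracChrom (Tgraph l) ≤ 4 + 1 / (2 ^ l : ℝ) := by
  refine ⟨isFoldColoring_Tgraph l, ?_⟩
  calc fracChrom (Tgraph l) ≤ ((4 * 2 ^ l + 1 : ℕ) : ℝ) / (2 ^ l : ℕ) :=
        fracChrom_le_of_isFoldColoring (by positivity) (isFoldColoring_Tgraph l)
    _ = 4 + 1 / (2 ^ l : ℝ) := by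
        push_cast
        field_simp
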